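/- arXiv:2404.13502 — 6 statements merged into one kernel-verified Lean document; each statement's English description precedes it below -/
import Mathlib

section
/- Let p : ℝ → ℝ be a polynomial of degree at most r with p(0) = 0 and |p(i)| ≤ 2 for all integers i = 1, …, N, where r ≤ N. Then for every real ℓ ≥ N, |p(ℓ)| ≤ 4 ℓ^r. -/
/-!
Interpolate `p` at the nodes `0, 1, …, r`. For `x ≥ r` the `i`-th Lagrange basis polynomial
satisfies `|Lᵢ(x)| = ∏_{j ≠ i} |x - j| / (i! (r - i)!) ≤ x ^ r / (i! (r - i)!)`, and
`∑ᵢ 1 / (i! (r - i)!) = 2 ^ r / r! ≤ 2`, so values bounded by `M` at the nodes give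
`|p(x)| ≤ 2 M x ^ r`.
-/

open Finset Polynomial Nat

theorem abs_eval_le_sum_abs_eval_mul_abs_eval_basis {F ι : Type*} [Field F] [LinearOrder F]
    [IsStrictOrderedRing F] [DecidableEq ι] {s : Finset ι} {v : ι → F} (hvs : Set.InjOn v s)
    {f : F[X]} (hf : f.degree < #s) (x : F) :
    |f.eval x| ≤ ∑ i ∈ s, |f.eval (v i)| * |(Lagrange.basis s v i).eval x| := by
  conv_lhs => rw [Lagrange.eq_interpolate hvs hf, Lagrange.interpolate_apply, eval_finsetSum]
  refine (abs_sum_le_sum_abs _ _).trans_eq (sum_congr rfl fun i _ => ?_)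
  rw [eval_mul, eval_C, abs_mul]

theorem prod_erase_range_abs_natCast_sub {r i : ℕ} (hi : i ≤ r) :
    ∏ j ∈ (range (r + 1)).erase i, |(i : ℝ) - j| = i ! * (r - i)! := by
  have hsplit : (range (r + 1)).erase i = range i ∪ Ico (i + 1) (r + 1) := by
    ext j
    simp only [mem_erase, mem_range, mem_union, mem_Ico]
    omega
  have hdisj : Disjoint (range i) (Ico (i + 1) (r + 1)) :=
    disjoint_left.2 fun j hj hj' => by simp only [mem_range, mem_Ico] at hj hj'; omega
  rw [hsplit, prod_union hdisj, prod_Ico_eq_prod_range]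
  congr 1
  · calc ∏ j ∈ range i, |(i : ℝ) - j| = ∏ j ∈ range i, ((i - j : ℕ) : ℝ) :=
          prod_congr rfl fun j hj => by
            have hji := (mem_range.1 hj).le
            rw [Nat.cast_sub hji, abs_of_nonneg (by simpa using hji)]
      _ = i ! := by rw [← Nat.cast_prod, ← descFactorial_eq_prod_range, descFactorial_self]
  · calc ∏ k ∈ range (r + 1 - (i + 1)), |(i : ℝ) - (i + 1 + k : ℕ)|
          = ∏ k ∈ range (r - i), ((k + 1 : ℕ) : ℝ) :=
          prod_congr (by congr 1; omega) fun k _ => by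
            push_cast
            rw [show (i : ℝ) - (i + 1 + k) = -(k + 1) by ring, abs_neg,
              abs_of_pos (by positivity)]
      _ = (r - i)! := by rw [← Nat.cast_prod, prod_range_add_one_eq_factorial]

theorem prod_erase_range_abs_sub_natCast_le {r i : ℕ} (hi : i ≤ r) {x : ℝ}
    (hx : (r : ℝ) ≤ x) :
    ∏ j ∈ (range (r + 1)).erase i, |x - j| ≤ x ^ r := by
  calc ∏ j ∈ (range (r + 1)).erase i, |x - j| ≤ ∏ _j ∈ (range (r + 1)).erase i, x := by
        refine prod_le_prod (fun _ _ => abs_nonneg _) fun j hj => ?_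
        have hjr : (j : ℝ) ≤ r := by
          exact_mod_cast Nat.lt_succ_iff.1 (mem_range.1 (mem_of_mem_erase hj))
        rw [abs_of_nonneg (by linarith)]
        linarith [j.cast_nonneg (α := ℝ)]
    _ = x ^ r := by
        rw [prod_const, card_erase_of_mem (mem_range.2 (Nat.lt_succ_of_le hi)), card_range,
          Nat.succ_sub_one]

theorem abs_eval_basis_range_natCast_le {r i : ℕ} (hi : i ≤ r) {x : ℝ}
    (hx : (r : ℝ) ≤ x) :
    |(Lagrange.basis (range (r + 1)) (Nat.cast : ℕ → ℝ) i).eval x| ≤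
      (i ! * (r - i)! : ℝ)⁻¹ * x ^ r := by
  have hterm : ∀ j ∈ (range (r + 1)).erase i,
      |(Lagrange.basisDivisor (i : ℝ) j).eval x| = |(i : ℝ) - j|⁻¹ * |x - j| := fun j _ => by
    rw [Lagrange.basisDivisor, eval_mul, eval_C, eval_sub, eval_X, eval_C, abs_mul, abs_inv]
  rw [Lagrange.basis, eval_prod, abs_prod, prod_congr rfl hterm, prod_mul_distrib,
    prod_inv_distrib, prod_erase_range_abs_natCast_sub hi]
  exact mul_le_mul_of_nonneg_left (prod_erase_range_abs_sub_natCast_le hi hx) (by positivity)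

theorem two_pow_le_two_mul_factorial (r : ℕ) : 2 ^ r ≤ 2 * r ! := by
  cases r with
  | zero => simp
  | succ n => simpa [pow_succ', add_comm 1 n] using
      Nat.mul_le_mul_left 2 (factorial_mul_pow_le_factorial (m := 1) (n := n))

theorem sum_range_inv_factorial_mul_factorial_le_two (r : ℕ) :
    ∑ i ∈ range (r + 1), (i ! * (r - i)! : ℝ)⁻¹ ≤ 2 := by
  have hchoose : ∀ i ∈ range (r + 1), (i ! * (r - i)! : ℝ)⁻¹ = r.choose i / r ! :=
    fun i hi => by
      rw [Nat.cast_choose ℝ (Nat.lt_succ_iff.1 (mem_range.1 hi))]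
      field_simp
  rw [sum_congr rfl hchoose, ← sum_div, ← Nat.cast_sum, sum_range_choose,
    div_le_iff₀ (by positivity)]
  exact_mod_cast two_pow_le_two_mul_factorial r

theorem abs_eval_le_two_mul_mul_pow_of_abs_eval_natCast_le {r : ℕ} {p : ℝ[X]}
    (hdeg : p.natDegree ≤ r) {M : ℝ} (hM : ∀ i ≤ r, |p.eval (i : ℝ)| ≤ M) {x : ℝ}
    (hx : (r : ℝ) ≤ x) :
    |p.eval x| ≤ 2 * M * x ^ r := by
  have hM0 : 0 ≤ M := (abs_nonneg _).trans (hM 0 r.zero_le)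
  have hdeg' : p.degree < #(range (r + 1)) := by
    rw [card_range]
    exact (degree_le_of_natDegree_le hdeg).trans_lt (WithBot.coe_lt_coe.2 r.lt_succ_self)
  refine (abs_eval_le_sum_abs_eval_mul_abs_eval_basis Nat.cast_injective.injOn hdeg' x).trans ?_
  calc _ ≤ ∑ i ∈ range (r + 1), M * ((i ! * (r - i)! : ℝ)⁻¹ * x ^ r) := by
        refine sum_le_sum fun i hi => ?_
        have hir := Nat.lt_succ_iff.1 (mem_range.1 hi)
        exact mul_le_mul (hM i hir) (abs_eval_basis_range_natCast_le hir hx) (abs_nonneg _) hM0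
    _ = M * x ^ r * ∑ i ∈ range (r + 1), (i ! * (r - i)! : ℝ)⁻¹ := by
        rw [mul_sum]
        exact sum_congr rfl fun i _ => by ring
    _ ≤ M * x ^ r * 2 :=
        mul_le_mul_of_nonneg_left (sum_range_inv_factorial_mul_factorial_le_two r)
          (mul_nonneg hM0 (pow_nonneg (r.cast_nonneg.trans hx) r))
    _ = 2 * M * x ^ r := by ring

/-- Let p : ℝ → ℝ be a polynomial of degree at most r with p(0) = 0 and |p(i)| ≤ 2
for all integers i = 1, …, N, where r ≤ N. Then for every real ℓ ≥ N, |p(ℓ)| ≤ 4 ℓ^r. -/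
theorem stmt1 (r N : ℕ) (hrN : r ≤ N) (p : Polynomial ℝ)
    (hdeg : p.natDegree ≤ r) (h0 : p.eval 0 = 0)
    (hb : ∀ i : ℕ, 1 ≤ i → i ≤ N → |p.eval (i : ℝ)| ≤ 2)
    (ℓ : ℝ) (hℓ : (N : ℝ) ≤ ℓ) :
    |p.eval ℓ| ≤ 4 * ℓ ^ r := by
  have hnodes : ∀ i ≤ r, |p.eval (i : ℝ)| ≤ 2 := fun i hi => by
    rcases i.eq_zero_or_pos with rfl | hpos
    · simp [h0]
    · exact hb i hpos (hi.trans hrN)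
  have hrℓ : (r : ℝ) ≤ ℓ := (Nat.cast_le.2 hrN).trans hℓ
  linarith [abs_eval_le_two_mul_mul_pow_of_abs_eval_natCast_le hdeg hnodes hrℓ]
end

section
/- Let p : ℝ → ℝ be a polynomial of degree at most r with p(0) = 0 and |p(i)| ≤ 2 for i = 1, …, N (r ≤ N), and write p(x) = Σ_{i=1}^r α_i · C(x, i) where C(x,i) = x(x−1)⋯(x−i+1)/i! is the generalized binomial coefficient. Then |α_i| ≤ 2 r^r for every i. -/
/-!
At a natural number `k` the generalized binomial coefficient `C(k, j)` is `k.choose j`, so the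
`α_j` are the Newton coefficients of `k ↦ p(k)` and are recovered by forward differences at `0`:
`α_i = Δ^i p (0) = ∑_{k ≤ i} (-1)^(i-k) (i choose k) p(k)`. As `p(0) = 0` and `|p(k)| ≤ 2`, this
gives `|α_i| ≤ 2 (2^i - 1) ≤ 2 r^r`.
-/

/-- The generalized binomial coefficient C(x, i) = x(x−1)⋯(x−i+1)/i!. -/
noncomputable def genBinom (x : ℝ) (i : ℕ) : ℝ :=
  (∏ j ∈ Finset.range i, (x - j)) / (Nat.factorial i)

open Finset fwdDiff

lemma genBinom_natCast (n k : ℕ) : genBinom n k = n.choose k := by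
  rw [genBinom, ← descPochhammer_eval_eq_prod_range, Nat.cast_choose_eq_descPochhammer_div]

lemma fwdDiff_iter_sum_choose_smul {G : Type*} [AddCommGroup G] (s : Finset ℕ) (a : ℕ → G)
    {n : ℕ} (hn : n ∈ s) :
    (Δ_[1])^[n] (fun k ↦ ∑ j ∈ s, k.choose j • a j) 0 = a n := by
  calc (Δ_[1])^[n] (fun k ↦ ∑ j ∈ s, k.choose j • a j) 0
      = ∑ j ∈ s, ((Δ_[1])^[n] (fun k ↦ k.choose j : ℕ → ℤ) 0) • a j := by
        simp only [fwdDiff_iter_eq_sum_shift, smul_sum, sum_smul, smul_assoc, natCast_zsmul]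
        exact sum_comm
    _ = a n := by
        simp only [fwdDiff_iter_choose_zero, ite_smul, one_smul, zero_smul, sum_ite_eq, hn,
          if_true]

lemma sum_range_choose_succ (n : ℕ) : ∑ k ∈ range n, n.choose (k + 1) = 2 ^ n - 1 := by
  have := Nat.sum_range_choose n
  rw [sum_range_succ', Nat.choose_zero_right] at this
  omega

lemma abs_fwdDiff_iter_le {f : ℕ → ℝ} {n : ℕ} {M : ℝ} (hf0 : f 0 = 0)
    (hf : ∀ k, 1 ≤ k → k ≤ n → |f k| ≤ M) :
    |(Δ_[1])^[n] f 0| ≤ M * (2 ^ n - 1) := by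
  rw [fwdDiff_iter_eq_sum_shift, sum_range_succ']
  simp only [zero_add, smul_eq_mul, mul_one, hf0, smul_zero, add_zero]
  calc |∑ k ∈ range n, ((-1 : ℤ) ^ (n - (k + 1)) * n.choose (k + 1) : ℤ) • f (k + 1 : ℕ)|
      ≤ ∑ k ∈ range n, n.choose (k + 1) * M := by
        refine (abs_sum_le_sum_abs _ _).trans (sum_le_sum fun k hk ↦ ?_)
        rw [mem_range] at hk
        rw [zsmul_eq_mul, abs_mul]
        push_cast
        rw [abs_mul, abs_pow, abs_neg, abs_one, one_pow, one_mul, Nat.abs_cast]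
        exact mul_le_mul_of_nonneg_left (hf _ (by omega) (by omega)) (by positivity)
    _ = M * (2 ^ n - 1) := by
        rw [← sum_mul, ← Nat.cast_sum, sum_range_choose_succ, Nat.cast_sub Nat.one_le_two_pow]
        push_cast; ring

lemma two_pow_le_pow_self_add_one {i r : ℕ} (hi : 1 ≤ i) (hir : i ≤ r) : 2 ^ i ≤ r ^ r + 1 := by
  rcases eq_or_lt_of_le (hi.trans hir) with rfl | hr
  · obtain rfl : i = 1 := le_antisymm hir hi
    rfl
  · calc 2 ^ i ≤ 2 ^ r := Nat.pow_le_pow_right two_pos hir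
      _ ≤ r ^ r := Nat.pow_le_pow_left hr r
      _ ≤ r ^ r + 1 := Nat.le_succ _

theorem stmt2_general (r N : ℕ) (hrN : r ≤ N) (p : Polynomial ℝ)
    (h0 : p.eval 0 = 0)
    (hb : ∀ i : ℕ, 1 ≤ i → i ≤ N → |p.eval (i : ℝ)| ≤ 2)
    (α : ℕ → ℝ)
    (hexp : ∀ x : ℝ, p.eval x = ∑ i ∈ Finset.Icc 1 r, α i * genBinom x i) :
    ∀ i ∈ Finset.Icc 1 r, |α i| ≤ 2 * (r : ℝ) ^ r := by
  intro i hi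
  obtain ⟨hi1, hir⟩ := mem_Icc.mp hi
  set f : ℕ → ℝ := fun k ↦ p.eval (k : ℝ)
  have hf : f = fun k ↦ ∑ j ∈ Icc 1 r, k.choose j • α j := by
    ext k
    simp only [f, hexp, genBinom_natCast, nsmul_eq_mul, mul_comm]
  have hα : α i = (Δ_[1])^[i] f 0 := by rw [hf, fwdDiff_iter_sum_choose_smul _ _ hi]
  have hbound : |α i| ≤ 2 * (2 ^ i - 1) := by
    rw [hα]
    exact abs_fwdDiff_iter_le (by simpa [f] using h0) fun k hk1 hki ↦ hb k hk1 (by omega)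
  have hpow : (2 : ℝ) ^ i ≤ (r : ℝ) ^ r + 1 := by
    exact_mod_cast two_pow_le_pow_self_add_one hi1 hir
  linarith

/-- Let p : ℝ → ℝ be a polynomial of degree at most r with p(0) = 0 and |p(i)| ≤ 2 for
i = 1, …, N (r ≤ N), and write p(x) = Σ_{i=1}^r α_i · C(x, i).
Then |α_i| ≤ 2 r^r for every i. -/
theorem stmt2 (r N : ℕ) (hr : 1 ≤ r) (hrN : r ≤ N) (p : Polynomial ℝ)
    (hdeg : p.natDegree ≤ r) (h0 : p.eval 0 = 0)
    (hb : ∀ i : ℕ, 1 ≤ i → i ≤ N → |p.eval (i : ℝ)| ≤ 2)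
    (α : ℕ → ℝ)
    (hexp : ∀ x : ℝ, p.eval x = ∑ i ∈ Finset.Icc 1 r, α i * genBinom x i) :
    ∀ i ∈ Finset.Icc 1 r, |α i| ≤ 2 * (r : ℝ) ^ r :=
  stmt2_general r N hrN p h0 hb α hexp
end

section
/- Let f : {−1,1}^n → ℝ with Fourier expansion f = Σ_S f̂(S) χ_S, let p be a polynomial of degree r with p(0)=0, written p(x) = Σ_{i=1}^r α_i C(x,i), and define g(x) = f(x) − Σ_{i=1}^r α_i Σ_{|S|=i} (∂f/∂x_S)(x) χ_S(x). Then g(x) = E[f] + Σ_{S ≠ ∅} (1 − p(|S|)) f̂(S) χ_S(x); in particular E_{x}[g(x)] = E[f] and Var_x[g(x)] = Σ_{ℓ=1}^n (1 − p(ℓ))² W^{=ℓ}[f]. -/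
def bval (b : Bool) : ℝ := if b then 1 else -1

/-- The parity χ_S(x) = Π_{i∈S} x_i. -/
def chi {n : ℕ} (S : Finset (Fin n)) (x : Fin n → Bool) : ℝ := ∏ i ∈ S, bval (x i)

/-- Expectation over uniform x ∈ {−1,1}^n. -/
noncomputable def cubeMean (n : ℕ) (f : (Fin n → Bool) → ℝ) : ℝ :=
  (∑ x : Fin n → Bool, f x) / 2 ^ n

/-- Fourier coefficient f̂(S) = E_x[f(x) χ_S(x)]. -/
noncomputable def fhat (n : ℕ) (f : (Fin n → Bool) → ℝ) (S : Finset (Fin n)) : ℝ :=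
  cubeMean n (fun x => f x * chi S x)

/-- Fourier weight at level ℓ: W^{=ℓ}[f] = Σ_{|S|=ℓ} f̂(S)². -/
noncomputable def Wlevel (n : ℕ) (f : (Fin n → Bool) → ℝ) (ℓ : ℕ) : ℝ :=
  ∑ S ∈ Finset.powersetCard ℓ (Finset.univ : Finset (Fin n)), (fhat n f S) ^ 2

noncomputable def Dcoord {n : ℕ} (i : Fin n) (f : (Fin n → Bool) → ℝ) : (Fin n → Bool) → ℝ :=
  fun x => (f (Function.update x i true) - f (Function.update x i false)) / 2

/-- The iterated discrete derivative ∂f/∂x_S. -/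
noncomputable def Dset {n : ℕ} (S : Finset (Fin n)) (f : (Fin n → Bool) → ℝ) :
    (Fin n → Bool) → ℝ :=
  S.toList.foldr Dcoord f

/-!
Every parity `χ_T` is an eigenfunction of `h ↦ Σ_{|S|=i} (∂h/∂x_S) χ_S` with eigenvalue
`C(|T|, i)`: indeed `∂χ_T/∂x_S = χ_{T∖S}` when `S ⊆ T` and `0` otherwise, and `χ_{T∖S} χ_S = χ_T`.
Expanding `f` in the Fourier basis, the correction term of `g` multiplies `f̂(T)` by
`Σ_i α_i C(|T|, i) = p(|T|)`, so `ĝ(T) = (1 - p(|T|)) f̂(T)`. The mean and variance of `g` are then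
read off from the orthonormality of the parities (Parseval).
-/

open Finset

lemma sum_erase_empty_eq_sum_Icc_sum_powersetCard {α M : Type*} [Fintype α] [DecidableEq α]
    [AddCommMonoid M] (F : Finset α → M) :
    ∑ S ∈ univ.erase ∅, F S =
      ∑ ℓ ∈ Icc 1 (Fintype.card α), ∑ S ∈ powersetCard ℓ univ, F S := by
  rw [← sum_fiberwise_of_maps_to (g := card) (t := Icc 1 (Fintype.card α))]
  · refine sum_congr rfl fun ℓ hℓ => sum_congr ?_ fun _ _ => rfl
    ext S
    have hℓ : 1 ≤ ℓ := (mem_Icc.mp hℓ).1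
    simp only [mem_filter, mem_erase, mem_univ, mem_powersetCard, subset_univ, true_and, and_true]
    exact ⟨fun h => h.2, fun h => ⟨by rintro rfl; simp at h; omega, h⟩⟩
  · intro S hS
    exact mem_Icc.mpr ⟨card_pos.mpr (nonempty_iff_ne_empty.mpr (ne_of_mem_erase hS)),
      card_le_univ S⟩

lemma genBinom_natCast_s5 (m i : ℕ) : genBinom m i = m.choose i := by
  rw [genBinom, ← descPochhammer_eval_eq_prod_range, Nat.cast_choose_eq_descPochhammer_div]

variable {n : ℕ}

section Parity

lemma bval_mul_self (b : Bool) : bval b * bval b = 1 := by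
  cases b <;> norm_num [bval]

lemma chi_empty : chi (∅ : Finset (Fin n)) = 1 := by
  funext x
  simp [chi]

lemma chi_mul_chi (S T : Finset (Fin n)) (x : Fin n → Bool) :
    chi S x * chi T x = chi (symmDiff S T) x := by
  have hunion : S ∪ T = symmDiff S T ∪ (S ∩ T) := by
    ext a; simp only [mem_union, mem_symmDiff, mem_inter]; tauto
  have hdisj : Disjoint (symmDiff S T) (S ∩ T) := by
    rw [disjoint_left]; intro a ha hb
    simp only [mem_symmDiff, mem_inter] at ha hb; tauto
  rw [chi, chi, chi, ← prod_union_inter, hunion, prod_union hdisj, mul_assoc,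
    ← prod_mul_distrib, prod_congr rfl fun i _ => bval_mul_self (x i), prod_const_one, mul_one]

lemma chi_sdiff_mul_chi {S T : Finset (Fin n)} (h : S ⊆ T) (x : Fin n → Bool) :
    chi (T \ S) x * chi S x = chi T x :=
  prod_sdiff h

lemma chi_update_of_mem {T : Finset (Fin n)} {i : Fin n} (hi : i ∈ T) (x : Fin n → Bool)
    (b : Bool) : chi T (Function.update x i b) = bval b * chi (T.erase i) x := by
  rw [chi, ← mul_prod_erase T _ hi, Function.update_self]
  congr 1
  exact prod_congr rfl fun j hj => by rw [Function.update_of_ne (ne_of_mem_erase hj)]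

lemma chi_update_of_notMem {T : Finset (Fin n)} {i : Fin n} (hi : i ∉ T) (x : Fin n → Bool)
    (b : Bool) : chi T (Function.update x i b) = chi T x :=
  prod_congr rfl fun j hj => by rw [Function.update_of_ne (ne_of_mem_of_not_mem hj hi)]

lemma sum_chi (U : Finset (Fin n)) :
    ∑ x : Fin n → Bool, chi U x = if U = ∅ then 2 ^ n else 0 := by
  have hfactor : ∀ x : Fin n → Bool, chi U x = ∏ i, if i ∈ U then bval (x i) else 1 := by
    intro x
    rw [chi, prod_ite_mem, univ_inter]
  have hcoord : ∀ i : Fin n, ∑ b : Bool, (if i ∈ U then bval b else 1) =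
      if i ∈ U then 0 else 2 := by
    intro i
    by_cases hi : i ∈ U <;> simp [hi, bval]
  simp_rw [hfactor, ← Fintype.prod_sum fun i b => if i ∈ U then bval b else 1, hcoord]
  split_ifs with hU
  · simp [hU]
  · obtain ⟨i, hi⟩ := nonempty_iff_ne_empty.mpr hU
    exact prod_eq_zero (mem_univ i) (if_pos hi)

lemma sum_chi_mul_chi (x y : Fin n → Bool) :
    ∑ S : Finset (Fin n), chi S x * chi S y = if x = y then 2 ^ n else 0 := by
  have hcoord : ∀ i, bval (x i) * bval (y i) + 1 = if x i = y i then 2 else 0 := by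
    intro i
    cases x i <;> cases y i <;> norm_num [bval]
  simp_rw [chi, ← prod_mul_distrib, ← powerset_univ, ← prod_add_one, hcoord]
  split_ifs with hxy
  · simp [hxy]
  · obtain ⟨i, hi⟩ := Function.ne_iff.mp hxy
    exact prod_eq_zero (mem_univ i) (if_neg hi)

end Parity

section Mean

lemma cubeMean_sum {ι : Type*} (A : Finset ι) (F : ι → (Fin n → Bool) → ℝ) :
    cubeMean n (fun x => ∑ i ∈ A, F i x) = ∑ i ∈ A, cubeMean n (F i) := by
  rw [cubeMean, sum_comm, sum_div]
  rfl

lemma cubeMean_const_mul (c : ℝ) (h : (Fin n → Bool) → ℝ) :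
    cubeMean n (fun x => c * h x) = c * cubeMean n h := by
  rw [cubeMean, cubeMean, ← mul_sum, mul_div_assoc]

lemma cubeMean_const_add (c : ℝ) (h : (Fin n → Bool) → ℝ) :
    cubeMean n (fun x => c + h x) = c + cubeMean n h := by
  simp [cubeMean, sum_add_distrib, add_div]

lemma cubeMean_chi (U : Finset (Fin n)) : cubeMean n (chi U) = if U = ∅ then 1 else 0 := by
  rw [cubeMean, sum_chi]
  split_ifs <;> simp

lemma cubeMean_chi_mul_chi (S T : Finset (Fin n)) :
    cubeMean n (fun x => chi S x * chi T x) = if S = T then 1 else 0 := by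
  simp_rw [chi_mul_chi]
  simp only [cubeMean_chi, symmDiff_eq_empty]

lemma fhat_empty (f : (Fin n → Bool) → ℝ) : fhat n f ∅ = cubeMean n f := by
  simp [fhat, chi_empty]

lemma fourier_expansion (f : (Fin n → Bool) → ℝ) (x : Fin n → Bool) :
    f x = ∑ S : Finset (Fin n), fhat n f S * chi S x := by
  have hdelta : ∀ y, f y * (∑ S : Finset (Fin n), chi S y * chi S x) / 2 ^ n =
      if y = x then f x else 0 := by
    intro y
    rw [sum_chi_mul_chi]
    split_ifs with hyx
    · rw [hyx, mul_div_assoc, div_self (by positivity), mul_one]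
    · simp
  calc f x = ∑ y, f y * (∑ S : Finset (Fin n), chi S y * chi S x) / 2 ^ n := by
        simp_rw [hdelta, sum_ite_eq', mem_univ, if_true]
    _ = ∑ S : Finset (Fin n), fhat n f S * chi S x := by
        simp only [fhat, cubeMean, mul_sum, sum_div, div_mul_eq_mul_div, sum_mul, mul_assoc]
        exact sum_comm

lemma cubeMean_sum_mul_chi_eq_zero {A : Finset (Finset (Fin n))} (hA : ∅ ∉ A)
    (c : Finset (Fin n) → ℝ) : cubeMean n (fun x => ∑ S ∈ A, c S * chi S x) = 0 := by
  rw [cubeMean_sum]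
  refine sum_eq_zero fun S hS => ?_
  rw [cubeMean_const_mul, cubeMean_chi, if_neg (ne_of_mem_of_not_mem hS hA), mul_zero]

lemma cubeMean_sq_sum_mul_chi (A : Finset (Finset (Fin n))) (c : Finset (Fin n) → ℝ) :
    cubeMean n (fun x => (∑ S ∈ A, c S * chi S x) ^ 2) = ∑ S ∈ A, c S ^ 2 := by
  simp_rw [sq, sum_mul_sum, mul_mul_mul_comm, cubeMean_sum, cubeMean_const_mul,
    cubeMean_chi_mul_chi, mul_ite, mul_one, mul_zero, sum_ite_eq]
  exact sum_congr rfl fun S hS => if_pos hS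

end Mean

section Derivative

lemma Dcoord_zero (i : Fin n) : Dcoord i (0 : (Fin n → Bool) → ℝ) = 0 := by
  funext x
  simp [Dcoord]

lemma Dcoord_sum_mul {ι : Type*} (i : Fin n) (A : Finset ι) (c : ι → ℝ)
    (F : ι → (Fin n → Bool) → ℝ) :
    Dcoord i (fun x => ∑ T ∈ A, c T * F T x) = fun x => ∑ T ∈ A, c T * Dcoord i (F T) x := by
  funext x
  simp only [Dcoord, ← sum_sub_distrib, sum_div, ← mul_sub, mul_div_assoc]

lemma Dcoord_chi (i : Fin n) (T : Finset (Fin n)) :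
    Dcoord i (chi T) = if i ∈ T then chi (T.erase i) else 0 := by
  funext x
  split_ifs with hi
  · simp only [Dcoord, chi_update_of_mem hi]
    norm_num [bval]
  · simp [Dcoord, chi_update_of_notMem hi]

lemma foldr_Dcoord_sum_mul {ι : Type*} (l : List (Fin n)) (A : Finset ι) (c : ι → ℝ)
    (F : ι → (Fin n → Bool) → ℝ) :
    l.foldr Dcoord (fun x => ∑ T ∈ A, c T * F T x) =
      fun x => ∑ T ∈ A, c T * l.foldr Dcoord (F T) x := by
  induction l with
  | nil => rfl
  | cons i l ih => rw [List.foldr_cons, ih, Dcoord_sum_mul]; rfl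

lemma foldr_Dcoord_chi {l : List (Fin n)} (hl : l.Nodup) (T : Finset (Fin n)) :
    l.foldr Dcoord (chi T) = if l.toFinset ⊆ T then chi (T \ l.toFinset) else 0 := by
  induction l with
  | nil => simp
  | cons a l ih =>
    obtain ⟨ha, hl⟩ := List.nodup_cons.mp hl
    simp only [List.foldr_cons, ih hl, List.toFinset_cons, insert_subset_iff]
    by_cases hlT : l.toFinset ⊆ T
    · have haT : a ∈ T \ l.toFinset ↔ a ∈ T := by simp [ha]
      simp only [hlT, if_true, and_true, Dcoord_chi, haT, sdiff_insert]
    · simp [hlT, Dcoord_zero]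

lemma Dset_chi (S T : Finset (Fin n)) : Dset S (chi T) = if S ⊆ T then chi (T \ S) else 0 := by
  simpa [Dset] using foldr_Dcoord_chi S.nodup_toList T

lemma Dset_mul_chi (f : (Fin n → Bool) → ℝ) (S : Finset (Fin n)) (x : Fin n → Bool) :
    Dset S f x * chi S x = ∑ T : Finset (Fin n), if S ⊆ T then fhat n f T * chi T x else 0 := by
  have hexp : Dset S f = fun x => ∑ T : Finset (Fin n), fhat n f T * Dset S (chi T) x := by
    conv_lhs => rw [funext (fourier_expansion f)]
    exact foldr_Dcoord_sum_mul _ _ _ _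
  rw [hexp, sum_mul]
  refine sum_congr rfl fun T _ => ?_
  rw [Dset_chi]
  split_ifs with hST
  · rw [mul_assoc, chi_sdiff_mul_chi hST]
  · simp

lemma sum_powersetCard_Dset_mul_chi (f : (Fin n → Bool) → ℝ) (i : ℕ) (x : Fin n → Bool) :
    ∑ S ∈ powersetCard i univ, Dset S f x * chi S x =
      ∑ T : Finset (Fin n), (T.card.choose i : ℝ) * (fhat n f T * chi T x) := by
  simp_rw [Dset_mul_chi]
  rw [sum_comm]
  refine sum_congr rfl fun T _ => ?_
  have hsub : (powersetCard i univ).filter (· ⊆ T) = powersetCard i T := by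
    ext S
    simp only [mem_filter, mem_powersetCard, subset_univ, true_and]
    tauto
  rw [← sum_filter, hsub, sum_const, card_powersetCard, nsmul_eq_mul]

lemma sum_mul_sum_powersetCard_Dset_mul_chi (f : (Fin n → Bool) → ℝ) (I : Finset ℕ)
    (α : ℕ → ℝ) (x : Fin n → Bool) :
    ∑ i ∈ I, α i * ∑ S ∈ powersetCard i univ, Dset S f x * chi S x =
      ∑ T : Finset (Fin n), (∑ i ∈ I, α i * genBinom T.card i) * (fhat n f T * chi T x) := by
  simp_rw [sum_powersetCard_Dset_mul_chi, genBinom_natCast_s5, mul_sum, sum_mul]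
  rw [sum_comm]
  simp_rw [mul_assoc]

end Derivative

theorem stmt5_general (n r : ℕ) (f : (Fin n → Bool) → ℝ)
    (p : Polynomial ℝ) (h0 : p.eval 0 = 0)
    (α : ℕ → ℝ)
    (hp : ∀ x : ℝ, p.eval x = ∑ i ∈ Finset.Icc 1 r, α i * genBinom x i)
    (g : (Fin n → Bool) → ℝ)
    (hg : ∀ x, g x = f x - ∑ i ∈ Finset.Icc 1 r, α i *
        ∑ S ∈ Finset.powersetCard i (Finset.univ : Finset (Fin n)), Dset S f x * chi S x) :
    (∀ x, g x = cubeMean n f +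
        ∑ S ∈ (Finset.univ : Finset (Finset (Fin n))).erase ∅,
          (1 - p.eval (S.card : ℝ)) * fhat n f S * chi S x)
    ∧ cubeMean n g = cubeMean n f
    ∧ cubeMean n (fun x => (g x - cubeMean n g) ^ 2) =
        ∑ ℓ ∈ Finset.Icc 1 n, (1 - p.eval (ℓ : ℝ)) ^ 2 * Wlevel n f ℓ := by
  set ghat : Finset (Fin n) → ℝ := fun S => (1 - p.eval (S.card : ℝ)) * fhat n f S
  have hexpand : ∀ x, g x = cubeMean n f + ∑ S ∈ univ.erase ∅, ghat S * chi S x := by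
    intro x
    have hfull : g x = ∑ S, ghat S * chi S x := by
      simp_rw [hg, sum_mul_sum_powersetCard_Dset_mul_chi, ← hp, fourier_expansion f x,
        ← sum_sub_distrib, ghat]
      exact sum_congr rfl fun S _ => by ring
    rw [hfull, ← add_sum_erase _ _ (mem_univ ∅)]
    simp [ghat, h0, fhat_empty, chi_empty]
  have hmean : cubeMean n g = cubeMean n f := by
    rw [funext hexpand, cubeMean_const_add,
      cubeMean_sum_mul_chi_eq_zero (notMem_erase ∅ univ), add_zero]
  refine ⟨hexpand, hmean, ?_⟩
  simp_rw [hmean, hexpand, add_sub_cancel_left]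
  rw [cubeMean_sq_sum_mul_chi, sum_erase_empty_eq_sum_Icc_sum_powersetCard, Fintype.card_fin]
  refine sum_congr rfl fun ℓ _ => ?_
  rw [Wlevel, mul_sum]
  refine sum_congr rfl fun S hS => ?_
  rw [← (mem_powersetCard.mp hS).2, mul_pow]

/-- For p of degree r with p(0)=0, p(x) = Σ_{i=1}^r α_i C(x,i), and
g(x) = f(x) − Σ_{i=1}^r α_i Σ_{|S|=i} (∂f/∂x_S)(x) χ_S(x), we have
g(x) = E[f] + Σ_{S ≠ ∅} (1 − p(|S|)) f̂(S) χ_S(x); in particular E[g] = E[f] and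
Var[g] = Σ_{ℓ=1}^n (1 − p(ℓ))² W^{=ℓ}[f]. -/
theorem stmt5 (n r : ℕ) (hr : 1 ≤ r) (f : (Fin n → Bool) → ℝ)
    (p : Polynomial ℝ) (hdeg : p.natDegree ≤ r) (h0 : p.eval 0 = 0)
    (α : ℕ → ℝ)
    (hp : ∀ x : ℝ, p.eval x = ∑ i ∈ Finset.Icc 1 r, α i * genBinom x i)
    (g : (Fin n → Bool) → ℝ)
    (hg : ∀ x, g x = f x - ∑ i ∈ Finset.Icc 1 r, α i *
        ∑ S ∈ Finset.powersetCard i (Finset.univ : Finset (Fin n)), Dset S f x * chi S x) :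
    (∀ x, g x = cubeMean n f +
        ∑ S ∈ (Finset.univ : Finset (Finset (Fin n))).erase ∅,
          (1 - p.eval (S.card : ℝ)) * fhat n f S * chi S x)
    ∧ cubeMean n g = cubeMean n f
    ∧ cubeMean n (fun x => (g x - cubeMean n g) ^ 2) =
        ∑ ℓ ∈ Finset.Icc 1 n, (1 - p.eval (ℓ : ℝ)) ^ 2 * Wlevel n f ℓ :=
  stmt5_general n r f p h0 α hp g hg
end

section
/- For positive integer ℓ there exist coefficients β_0, …, β_{2ℓ−1} with |β_i| ≤ (2ℓ)^{3ℓ} such that for every smooth f : ℝ → ℝ, every x, and every δ > 0: |Σ_{i=0}^{2ℓ−1} β_i f(x − iδ) − f^{(ℓ)}(x) δ^ℓ| ≤ (2ℓ)^{3ℓ+1} δ^{2ℓ} · max_{ξ ∈ [x − 2ℓδ, x]} |f^{(2ℓ)}(ξ)|. -/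
open Polynomial Finset

lemma coeff_prod_linear_le (a : ℕ → ℝ) (R : ℝ) (hR : 1 ≤ R) :
    ∀ (t : Finset ℕ), (∀ j ∈ t, |a j| ≤ R) →
    ∀ k, |(∏ j ∈ t, (X - C (a j))).coeff k| ≤ (t.card.choose k : ℝ) * R ^ (t.card - k) := by
  intro t
  induction t using Finset.induction with
  | empty =>
    intro _ k
    cases k with
    | zero => simp
    | succ k => simp [Nat.choose, coeff_one]
  | @insert i t hit ih =>
    intro ha k
    have hai : |a i| ≤ R := ha i (mem_insert_self i t)
    have ihq := ih (fun j hj => ha j (mem_insert_of_mem hj))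
    set Q := ∏ j ∈ t, (X - C (a j)) with hQ
    have hprod : ∏ j ∈ insert i t, (X - C (a j)) = (X - C (a i)) * Q := by
      rw [prod_insert hit]
    have hcard : (insert i t).card = t.card + 1 := card_insert_of_notMem hit
    have hR0 : (0:ℝ) ≤ R := le_trans zero_le_one hR
    rw [hprod, hcard]
    cases k with
    | zero =>
      rw [mul_coeff_zero]
      have : (X - C (a i)).coeff 0 = -(a i) := by simp
      rw [this, abs_mul, abs_neg]
      calc |a i| * |Q.coeff 0| ≤ R * ((t.card.choose 0 : ℝ) * R ^ (t.card - 0)) := by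
            exact mul_le_mul hai (ihq 0) (abs_nonneg _) hR0
        _ = ((t.card+1).choose 0 : ℝ) * R ^ (t.card + 1 - 0) := by
            simp [pow_succ]; ring
    | succ k =>
      have hco : ((X - C (a i)) * Q).coeff (k+1) = Q.coeff k - a i * Q.coeff (k+1) := by
        rw [sub_mul, coeff_sub, coeff_X_mul, coeff_C_mul]
      rw [hco]
      have h1 : |Q.coeff k - a i * Q.coeff (k+1)| ≤ |Q.coeff k| + |a i| * |Q.coeff (k+1)| := by
        calc |Q.coeff k - a i * Q.coeff (k+1)| ≤ |Q.coeff k| + |a i * Q.coeff (k+1)| :=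
              abs_sub _ _
          _ = |Q.coeff k| + |a i| * |Q.coeff (k+1)| := by rw [abs_mul]
      refine h1.trans ?_
      have h2 : |a i| * |Q.coeff (k+1)| ≤ (t.card.choose (k+1) : ℝ) * R ^ (t.card - k) := by
        rcases le_or_gt (k+1) t.card with hk | hk
        · have hexp : t.card - k = (t.card - (k+1)) + 1 := by omega
          calc |a i| * |Q.coeff (k+1)| ≤ R * ((t.card.choose (k+1) : ℝ) * R ^ (t.card - (k+1))) :=
                mul_le_mul hai (ihq (k+1)) (abs_nonneg _) hR0
            _ = (t.card.choose (k+1) : ℝ) * R ^ (t.card - k) := by rw [hexp, pow_succ]; ring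
        · have hch : t.card.choose (k+1) = 0 := Nat.choose_eq_zero_of_lt hk
          have h0 : Q.coeff (k+1) = 0 := by
            have h := ihq (k+1)
            rw [hch] at h
            simp only [Nat.cast_zero, zero_mul] at h
            exact abs_eq_zero.mp (le_antisymm h (abs_nonneg _))
          rw [h0, hch]
          simp
      calc |Q.coeff k| + |a i| * |Q.coeff (k+1)|
          ≤ (t.card.choose k : ℝ) * R ^ (t.card - k) + (t.card.choose (k+1) : ℝ) * R ^ (t.card - k) :=
            add_le_add (ihq k) h2
        _ = ((t.card.choose k + t.card.choose (k+1) : ℕ) : ℝ) * R ^ (t.card - k) := by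
            push_cast; ring
        _ = ((t.card+1).choose (k+1) : ℝ) * R ^ (t.card + 1 - (k+1)) := by
            rw [Nat.succ_sub_succ, Nat.choose_succ_succ]

lemma idw_eq {f : ℝ → ℝ} (hf : ContDiff ℝ (⊤ : ℕ∞) f) {s : Set ℝ} (hs : UniqueDiffOn ℝ s)
    {x : ℝ} (hx : x ∈ s) (n : ℕ) : iteratedDerivWithin n f s x = iteratedDeriv n f x := by
  have hf' : ContDiff ℝ ((⊤ : ℕ∞) : WithTop ℕ∞) f := hf.of_le (by simp)
  have h := (contDiff_iff_ftaylorSeries.mp hf').hasFTaylorSeriesUpToOn s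
  have h2 := h.eq_iteratedFDerivWithin_of_uniqueDiffOn (m := n) (by exact_mod_cast le_top) hs hx
  rw [iteratedDerivWithin_eq_iteratedFDerivWithin, iteratedDeriv_eq_iteratedFDeriv, ← h2]
  rfl

lemma taylor_left {f : ℝ → ℝ} (hf : ContDiff ℝ (⊤ : ℕ∞) f) {y x : ℝ} (hy : y < x) (m : ℕ) (hm : 0 < m) :
    ∃ ξ ∈ Set.Ioo y x, f y =
      (∑ k ∈ Finset.range m, (k.factorial : ℝ)⁻¹ * (y - x) ^ k * iteratedDeriv k f x)
        + iteratedDeriv m f ξ * (y - x) ^ m / m.factorial := by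
  set g : ℝ → ℝ := fun t => f (2 * x - t) with hgdef
  have hgeq : g = fun z => (fun u => f (-u)) (z + -(2 * x)) := by
    funext u; simp only [hgdef]; ring_nf
  have hg : ContDiff ℝ (⊤ : ℕ∞) g := hf.comp (contDiff_const.sub contDiff_id)
  have hgiter : ∀ k t, iteratedDeriv k g t = (-1 : ℝ) ^ k * iteratedDeriv k f (2 * x - t) := by
    intro k t
    have h1 : iteratedDeriv k g t = iteratedDeriv k (fun u => f (-u)) (t + -(2 * x)) := by
      calc iteratedDeriv k g t
          = iteratedDeriv k (fun z => (fun u => f (-u)) (z + -(2 * x))) t := by rw [hgeq]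
        _ = _ := congrFun (iteratedDeriv_comp_add_const k (fun u => f (-u)) (-(2 * x))) t
    rw [h1, iteratedDeriv_comp_neg, smul_eq_mul]
    congr 1
    ring
  set z : ℝ := 2 * x - y with hzdef
  have hz : x < z := by simp only [hzdef]; linarith
  have hcd : ContDiffOn ℝ (m - 1 : ℕ) g (Set.Icc x z) := (hg.of_le (by exact WithTop.coe_le_coe.mpr le_top)).contDiffOn
  have hud : UniqueDiffOn ℝ (Set.Icc x z) := uniqueDiffOn_Icc hz
  have hdiff : DifferentiableOn ℝ (iteratedDerivWithin (m - 1) g (Set.Icc x z)) (Set.Ioo x z) := by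
    have hd : Differentiable ℝ (iteratedDeriv (m - 1) g) := by
      apply hg.differentiable_iteratedDeriv
      exact WithTop.coe_lt_coe.mpr (ENat.natCast_lt_top _)
    refine (hd.differentiableOn).congr ?_
    intro t ht
    exact idw_eq hg hud (Set.mem_Icc_of_Ioo ht) (m - 1)
  obtain ⟨x', hx', H⟩ : ∃ x' ∈ Set.Ioo x z, g z - taylorWithinEval g (m - 1) (Set.Icc x z) x z =
      iteratedDerivWithin (m - 1 + 1) g (Set.Icc x z) x' * (z - x) ^ (m - 1 + 1) / (m - 1 + 1).factorial := by
    have h := taylor_mean_remainder_lagrange (f := g) hz.ne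
      (by rw [Set.uIcc_of_le hz.le]; exact hcd)
      (by rw [Set.uIcc_of_le hz.le, Set.uIoo_of_le hz.le]; exact hdiff)
    rw [Set.uIcc_of_le hz.le, Set.uIoo_of_le hz.le] at h
    exact h
  have hm1 : m - 1 + 1 = m := by omega
  rw [hm1] at H
  have hzx : z - x = x - y := by simp only [hzdef]; ring
  have hgz : g z = f y := by simp only [hgdef, hzdef]; ring_nf
  have htw : taylorWithinEval g (m - 1) (Set.Icc x z) x z =
      ∑ k ∈ Finset.range m, (k.factorial : ℝ)⁻¹ * (y - x) ^ k * iteratedDeriv k f x := by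
    rw [taylor_within_apply, hm1]
    refine Finset.sum_congr rfl fun k _ => ?_
    rw [idw_eq hg hud (Set.left_mem_Icc.mpr hz.le) k, hgiter k x, smul_eq_mul]
    have h2x : 2 * x - x = x := by ring
    rw [h2x, hzx]
    have hpow : (y - x) ^ k = (-1 : ℝ) ^ k * (x - y) ^ k := by
      rw [← mul_pow]; congr 1; ring
    rw [hpow]; ring
  have hD : iteratedDerivWithin m g (Set.Icc x z) x' = (-1 : ℝ) ^ m * iteratedDeriv m f (2 * x - x') :=
    (idw_eq hg hud (Set.mem_Icc_of_Ioo hx') m).trans (hgiter m x')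
  rw [hgz, htw, hD, hzx] at H
  refine ⟨2 * x - x', ⟨?_, ?_⟩, ?_⟩
  · have := hx'.2; simp only [hzdef] at this; linarith
  · have := hx'.1; linarith
  · have hpow : (-1 : ℝ) ^ m * (x - y) ^ m = (y - x) ^ m := by
      rw [← mul_pow]; congr 1; ring
    linear_combination H + (iteratedDeriv m f (2 * x - x') / (m.factorial : ℝ)) * hpow

lemma choose_le_two_pow' (m k : ℕ) : m.choose k ≤ 2 ^ m := by
  rcases le_or_gt k m with h | h
  · calc m.choose k ≤ ∑ j ∈ range (m+1), m.choose j :=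
        Finset.single_le_sum (fun j _ => Nat.zero_le _) (mem_range.mpr (Nat.lt_succ_of_le h))
      _ = 2 ^ m := Nat.sum_range_choose m
  · rw [Nat.choose_eq_zero_of_lt h]; exact Nat.zero_le _

lemma two_pow_le_aux : ∀ l : ℕ, 1 ≤ l → 2 ^ (2 * l - 1) ≤ 2 * l * l ^ l := by
  intro l hl
  induction l, hl using Nat.le_induction with
  | base => norm_num
  | succ l hl ih =>
    have hE : 2 * (l + 1) - 1 = (2 * l - 1) + 2 := by omega
    rw [hE, pow_add]
    have h1 : 2 ^ (2 * l - 1) * 2 ^ 2 ≤ 2 * l * l ^ l * 4 := by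
      have := Nat.mul_le_mul_right (2^2) ih
      simpa [mul_comm] using this
    refine h1.trans ?_
    have h2 : (l + 1) ^ (l + 1) ≥ (l + 1) * l ^ l := by
      rw [pow_succ']
      exact Nat.mul_le_mul_left _ (Nat.pow_le_pow_left (Nat.le_succ l) l)
    have h3 : 2 * (l + 1) * ((l + 1) * l ^ l) ≤ 2 * (l + 1) * (l + 1) ^ (l + 1) :=
      Nat.mul_le_mul_left _ h2
    refine le_trans ?_ h3
    have h4 : 4 * l ≤ (l + 1) * (l + 1) := by nlinarith
    calc 2 * l * l ^ l * 4 = (4 * l) * (2 * l ^ l) := by ring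
      _ ≤ ((l + 1) * (l + 1)) * (2 * l ^ l) := Nat.mul_le_mul_right _ h4
      _ = 2 * (l + 1) * ((l + 1) * l ^ l) := by ring

lemma nat_final (ℓ : ℕ) (hℓ : 1 ≤ ℓ) :
    ℓ.factorial * 2 ^ (2 * ℓ - 1) ≤ 2 * ℓ * (2 * ℓ).factorial := by
  have ha : ℓ.factorial * ℓ ^ ℓ ≤ (2 * ℓ).factorial := by
    have := Nat.factorial_mul_pow_le_factorial (m := ℓ) (n := ℓ)
    have h2 : ℓ ^ ℓ ≤ (ℓ + 1) ^ ℓ := Nat.pow_le_pow_left (Nat.le_succ ℓ) ℓ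
    calc ℓ.factorial * ℓ ^ ℓ ≤ ℓ.factorial * (ℓ + 1) ^ ℓ := Nat.mul_le_mul_left _ h2
      _ ≤ (ℓ + ℓ).factorial := this
      _ = (2 * ℓ).factorial := by rw [two_mul]
  calc ℓ.factorial * 2 ^ (2 * ℓ - 1) ≤ ℓ.factorial * (2 * ℓ * ℓ ^ ℓ) :=
        Nat.mul_le_mul_left _ (two_pow_le_aux ℓ hℓ)
    _ = 2 * ℓ * (ℓ.factorial * ℓ ^ ℓ) := by ring
    _ ≤ 2 * ℓ * (2 * ℓ).factorial := Nat.mul_le_mul_left _ ha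

section helper
lemma nat_beta (ℓ : ℕ) (hℓ : 1 ≤ ℓ) :
    ℓ.factorial * 2 ^ (2 * ℓ - 1) * (2 * ℓ) ^ (ℓ - 1) ≤ (2 * ℓ) ^ (3 * ℓ) := by
  have h1 : ℓ.factorial ≤ ℓ ^ ℓ := Nat.factorial_le_pow ℓ
  calc ℓ.factorial * 2 ^ (2 * ℓ - 1) * (2 * ℓ) ^ (ℓ - 1)
      ≤ ℓ ^ ℓ * 2 ^ (2 * ℓ - 1) * (2 * ℓ) ^ (ℓ - 1) := by
        exact Nat.mul_le_mul_right _ (Nat.mul_le_mul_right _ h1)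
    _ = 2 ^ (3 * ℓ - 2) * ℓ ^ (2 * ℓ - 1) := by
        rw [mul_pow]
        rw [show 3 * ℓ - 2 = (2 * ℓ - 1) + (ℓ - 1) by omega,
            show 2 * ℓ - 1 = ℓ + (ℓ - 1) by omega]
        rw [pow_add, pow_add]
        ring
    _ ≤ 2 ^ (3 * ℓ) * ℓ ^ (3 * ℓ) := by
        exact Nat.mul_le_mul (Nat.pow_le_pow_right (by norm_num) (by omega))
          (Nat.pow_le_pow_right hℓ (by omega))
    _ = (2 * ℓ) ^ (3 * ℓ) := (mul_pow 2 ℓ (3 * ℓ)).symm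
end helper

lemma coeff_prod_linear_le' (a : ℕ → ℝ) (R : ℝ) (hR : 1 ≤ R)
    (t : Finset ℕ) (ha : ∀ j ∈ t, |a j| ≤ R) (k : ℕ) :
    |(∏ j ∈ t, (X - C (a j))).coeff k| ≤ (t.card.choose k : ℝ) * R ^ (t.card - k) :=
  coeff_prod_linear_le a R hR t ha k



lemma moments (n ℓ : ℕ) (hℓn : ℓ < n) (j : ℕ) (hj : j < n) :
    ∑ i ∈ range n, ((ℓ.factorial : ℝ) *
        (Lagrange.basis (range n) (fun j => -(j : ℝ)) i).coeff ℓ) * (-(i : ℝ)) ^ j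
      = if j = ℓ then (ℓ.factorial : ℝ) else 0 := by
  have hinj : Set.InjOn (fun j : ℕ => -(j : ℝ)) (range n : Set ℕ) := by
    intro a _ b _ hab
    have h : (a : ℝ) = (b : ℝ) := neg_injective hab
    exact_mod_cast h
  have hdeg : ((X : ℝ[X]) ^ j).degree < (range n).card := by
    rw [degree_X_pow, card_range]; exact_mod_cast hj
  have h := Lagrange.eq_interpolate hinj hdeg
  have h2 := congrArg (fun p => p.coeff ℓ) h
  simp only [Lagrange.interpolate_apply, finset_sum_coeff, coeff_C_mul, coeff_X_pow,
    eval_pow, eval_X] at h2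
  calc ∑ i ∈ range n, ((ℓ.factorial : ℝ) *
          (Lagrange.basis (range n) (fun j => -(j : ℝ)) i).coeff ℓ) * (-(i : ℝ)) ^ j
      = (ℓ.factorial : ℝ) * ∑ i ∈ range n,
          (-(i : ℝ)) ^ j * (Lagrange.basis (range n) (fun j => -(j : ℝ)) i).coeff ℓ := by
        rw [Finset.mul_sum]; exact Finset.sum_congr rfl fun i _ => by ring
    _ = (ℓ.factorial : ℝ) * (if ℓ = j then 1 else 0) := by rw [← h2]
    _ = if j = ℓ then (ℓ.factorial : ℝ) else 0 := by
        by_cases hc : j = ℓ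
        · simp [hc]
        · rw [if_neg hc, if_neg (fun h : ℓ = j => hc h.symm), mul_zero]

lemma beta_abs_le (n ℓ : ℕ) (hn0 : 0 < n) (i : ℕ) (hi : i ∈ range n) :
    |(ℓ.factorial : ℝ) * (Lagrange.basis (range n) (fun j => -(j : ℝ)) i).coeff ℓ|
      ≤ (ℓ.factorial : ℝ) * (2 ^ (n - 1) * (n : ℝ) ^ (n - 1 - ℓ)) := by
  set v : ℕ → ℝ := fun j => -(j : ℝ) with hv
  have hbasis : Lagrange.basis (range n) v i
      = C (∏ j ∈ (range n).erase i, (v i - v j)⁻¹) *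
        ∏ j ∈ (range n).erase i, (X - C (v j)) := by
    simp only [Lagrange.basis, Lagrange.basisDivisor]
    rw [map_prod, ← Finset.prod_mul_distrib]
  have hcard : ((range n).erase i).card = n - 1 := by
    rw [Finset.card_erase_of_mem hi, Finset.card_range]
  have hc1 : |∏ j ∈ (range n).erase i, (v i - v j)⁻¹| ≤ 1 := by
    rw [Finset.abs_prod]
    apply Finset.prod_le_one (fun j _ => abs_nonneg _)
    intro j hj
    rw [abs_inv]
    apply inv_le_one_of_one_le₀
    have hji : j ≠ i := (Finset.mem_erase.mp hj).1
    have hne : ((i : ℤ) - j) ≠ 0 := by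
      intro h
      exact hji (by exact_mod_cast (sub_eq_zero.mp h).symm)
    have h1 : (1 : ℤ) ≤ |(i : ℤ) - j| := Int.one_le_abs hne
    have h2 : (1 : ℝ) ≤ |(i : ℝ) - (j : ℝ)| := by exact_mod_cast h1
    calc (1 : ℝ) ≤ |(i : ℝ) - (j : ℝ)| := h2
      _ = |v i - v j| := by rw [hv]; rw [abs_sub_comm]; congr 1; ring
  have hR : (1 : ℝ) ≤ (n : ℝ) := by exact_mod_cast hn0
  have hcoeff : |(∏ j ∈ (range n).erase i, (X - C (v j))).coeff ℓ|
      ≤ (((n - 1).choose ℓ : ℕ) : ℝ) * (n : ℝ) ^ (n - 1 - ℓ) := by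
    have h := coeff_prod_linear_le' v (n : ℝ) hR ((range n).erase i) ?_ ℓ
    · rwa [hcard] at h
    · intro j hj
      have hj' : j < n := Finset.mem_range.mp (Finset.mem_of_mem_erase hj)
      rw [hv]
      simp only [abs_neg, Nat.abs_cast]
      exact_mod_cast hj'.le
  have hch : (((n - 1).choose ℓ : ℕ) : ℝ) ≤ (2 : ℝ) ^ (n - 1) := by
    have h := choose_le_two_pow' (n - 1) ℓ
    exact_mod_cast h
  rw [hbasis, coeff_C_mul, abs_mul, abs_mul, Nat.abs_cast]
  have hf0 : (0 : ℝ) ≤ (ℓ.factorial : ℝ) := by positivity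
  refine mul_le_mul_of_nonneg_left ?_ hf0
  calc |∏ j ∈ (range n).erase i, (v i - v j)⁻¹| *
        |(∏ j ∈ (range n).erase i, (X - C (v j))).coeff ℓ|
      ≤ 1 * ((((n - 1).choose ℓ : ℕ) : ℝ) * (n : ℝ) ^ (n - 1 - ℓ)) :=
        mul_le_mul hc1 hcoeff (abs_nonneg _) zero_le_one
    _ ≤ 2 ^ (n - 1) * (n : ℝ) ^ (n - 1 - ℓ) := by
        rw [one_mul]
        exact mul_le_mul_of_nonneg_right hch (by positivity)


/-- Backwards-difference numerical differentiation: for a positive integer ℓ there are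
coefficients β_0, …, β_{2ℓ−1} with |β_i| ≤ (2ℓ)^{3ℓ} such that for every smooth f,
every x, and every δ > 0,
|Σ_{i=0}^{2ℓ−1} β_i f(x − iδ) − f^{(ℓ)}(x) δ^ℓ|
  ≤ (2ℓ)^{3ℓ+1} δ^{2ℓ} · max_{ξ ∈ [x−2ℓδ, x]} |f^{(2ℓ)}(ξ)|. -/
theorem stmt8 (ℓ : ℕ) (hℓ : 0 < ℓ) :
    ∃ β : ℕ → ℝ,
      (∀ i < 2 * ℓ, |β i| ≤ (2 * ℓ : ℝ) ^ (3 * ℓ)) ∧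
      ∀ f : ℝ → ℝ, ContDiff ℝ (⊤ : ℕ∞) f → ∀ x δ : ℝ, 0 < δ →
        |(∑ i ∈ Finset.range (2 * ℓ), β i * f (x - i * δ)) - iteratedDeriv ℓ f x * δ ^ ℓ|
          ≤ (2 * ℓ : ℝ) ^ (3 * ℓ + 1) * δ ^ (2 * ℓ) *
            sSup ((fun ξ => |iteratedDeriv (2 * ℓ) f ξ|) '' Set.Icc (x - 2 * ℓ * δ) x) := by
  set n := 2 * ℓ with hn
  have hn0 : 0 < n := by omega
  have hℓn : ℓ < n := by omega
  set β : ℕ → ℝ :=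
    fun i => (ℓ.factorial : ℝ) * (Lagrange.basis (range n) (fun j => -(j : ℝ)) i).coeff ℓ
    with hβdef
  have hB : ∀ i ∈ range n, |β i| ≤ (ℓ.factorial : ℝ) * (2 ^ (n - 1) * (n : ℝ) ^ (n - 1 - ℓ)) :=
    fun i hi => beta_abs_le n ℓ hn0 i hi
  have hBnn : (0 : ℝ) ≤ (ℓ.factorial : ℝ) * (2 ^ (n - 1) * (n : ℝ) ^ (n - 1 - ℓ)) := by positivity
  refine ⟨β, ?_, ?_⟩
  · -- coefficient bound
    intro i hi
    have h1 := hB i (mem_range.mpr hi)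
    have h2 : (ℓ.factorial : ℝ) * (2 ^ (n - 1) * (n : ℝ) ^ (n - 1 - ℓ))
        ≤ ((2 * ℓ : ℕ) : ℝ) ^ (3 * ℓ) := by
      have hnat := nat_beta ℓ hℓ
      have hexp : n - 1 - ℓ = ℓ - 1 := by omega
      rw [hexp]
      calc (ℓ.factorial : ℝ) * (2 ^ (n - 1) * (n : ℝ) ^ (ℓ - 1))
          = ((ℓ.factorial * 2 ^ (2 * ℓ - 1) * (2 * ℓ) ^ (ℓ - 1) : ℕ) : ℝ) := by
            push_cast [hn]
            ring
        _ ≤ (((2 * ℓ) ^ (3 * ℓ) : ℕ) : ℝ) := by exact_mod_cast hnat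
        _ = ((2 * ℓ : ℕ) : ℝ) ^ (3 * ℓ) := by push_cast; ring
    have h3 : ((2 * ℓ : ℕ) : ℝ) ^ (3 * ℓ) = (2 * (ℓ : ℝ)) ^ (3 * ℓ) := by push_cast; ring
    calc |β i| ≤ _ := h1
      _ ≤ ((2 * ℓ : ℕ) : ℝ) ^ (3 * ℓ) := h2
      _ = (2 * (ℓ : ℝ)) ^ (3 * ℓ) := h3
  · intro f hf x δ hδ
    set M : ℝ := sSup ((fun ξ => |iteratedDeriv n f ξ|) '' Set.Icc (x - 2 * ℓ * δ) x) with hM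
    have hax : x - 2 * (ℓ : ℝ) * δ ≤ x := by nlinarith [hℓ, hδ.le]
    have hcont : ContinuousOn (fun ξ => |iteratedDeriv n f ξ|) (Set.Icc (x - 2 * ℓ * δ) x) :=
      ((hf.continuous_iteratedDeriv n (by exact_mod_cast le_top)).abs).continuousOn
    have hMle : ∀ ξ ∈ Set.Icc (x - 2 * (ℓ : ℝ) * δ) x, |iteratedDeriv n f ξ| ≤ M :=
      fun ξ hξ => hcont.le_sSup_image_Icc hξ
    have hM0 : 0 ≤ M := (abs_nonneg _).trans (hMle x (Set.right_mem_Icc.mpr hax))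
    -- Taylor expansion at every node
    have hexp : ∀ i ∈ range n, ∃ ξ ∈ Set.Icc (x - 2 * (ℓ : ℝ) * δ) x,
        f (x - i * δ) = (∑ k ∈ range n,
            (k.factorial : ℝ)⁻¹ * (-(i : ℝ) * δ) ^ k * iteratedDeriv k f x)
          + iteratedDeriv n f ξ * (-(i : ℝ) * δ) ^ n / n.factorial := by
      intro i hi
      have hiℝ : (i : ℝ) ≤ (n : ℝ) := by exact_mod_cast (mem_range.mp hi).le
      rcases Nat.eq_zero_or_pos i with h0 | hpos
      · subst h0
        refine ⟨x, Set.right_mem_Icc.mpr hax, ?_⟩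
        simp only [Nat.cast_zero, neg_zero, zero_mul, mul_zero, sub_zero]
        rw [zero_pow (by omega : n ≠ 0)]
        rw [Finset.sum_eq_single 0 (fun k _ hk => by rw [zero_pow hk]; ring)
          (fun h => absurd (mem_range.mpr hn0) h)]
        simp
      · have hyx : x - i * δ < x := by
          have : 0 < (i : ℝ) * δ := mul_pos (by exact_mod_cast hpos) hδ
          linarith
        obtain ⟨ξ, hξ, hT⟩ := taylor_left hf hyx n hn0
        rw [show x - (i : ℝ) * δ - x = -(i : ℝ) * δ by ring] at hT
        refine ⟨ξ, ⟨?_, hξ.2.le⟩, hT⟩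
        have h1 : x - 2 * (ℓ : ℝ) * δ ≤ x - i * δ := by
          have h2 : (i : ℝ) * δ ≤ (n : ℝ) * δ := mul_le_mul_of_nonneg_right hiℝ hδ.le
          have h3 : (n : ℝ) = 2 * (ℓ : ℝ) := by rw [hn]; push_cast; ring
          nlinarith
        linarith [hξ.1]
    choose! ξ hξmem hξeq using hexp
    -- key algebraic identity
    have hmom' : ∀ k, k < n → ∑ i ∈ range n, β i * (-(i : ℝ)) ^ k
        = if k = ℓ then (ℓ.factorial : ℝ) else 0 := fun k hk => moments n ℓ hℓn k hk
    have hkey : (∑ i ∈ range n, β i * f (x - i * δ)) - iteratedDeriv ℓ f x * δ ^ ℓ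
        = ∑ i ∈ range n, β i * (iteratedDeriv n f (ξ i) * (-(i : ℝ) * δ) ^ n / n.factorial) := by
      have hsplit : ∑ i ∈ range n, β i * f (x - i * δ)
          = (∑ i ∈ range n, ∑ k ∈ range n,
              β i * ((k.factorial : ℝ)⁻¹ * (-(i : ℝ) * δ) ^ k * iteratedDeriv k f x))
            + ∑ i ∈ range n,
                β i * (iteratedDeriv n f (ξ i) * (-(i : ℝ) * δ) ^ n / n.factorial) := by
        rw [← Finset.sum_add_distrib]
        refine Finset.sum_congr rfl fun i hi => ?_
        rw [hξeq i hi, mul_add, Finset.mul_sum]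
      have hpoly : (∑ i ∈ range n, ∑ k ∈ range n,
            β i * ((k.factorial : ℝ)⁻¹ * (-(i : ℝ) * δ) ^ k * iteratedDeriv k f x))
          = iteratedDeriv ℓ f x * δ ^ ℓ := by
        rw [Finset.sum_comm]
        have hc : ∀ k ∈ range n, ∑ i ∈ range n,
              β i * ((k.factorial : ℝ)⁻¹ * (-(i : ℝ) * δ) ^ k * iteratedDeriv k f x)
            = ((k.factorial : ℝ)⁻¹ * δ ^ k * iteratedDeriv k f x)
              * (if k = ℓ then (ℓ.factorial : ℝ) else 0) := by
          intro k hk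
          rw [← hmom' k (mem_range.mp hk), Finset.mul_sum]
          refine Finset.sum_congr rfl fun i _ => ?_
          rw [mul_pow]
          ring
        rw [Finset.sum_congr rfl hc]
        rw [Finset.sum_eq_single ℓ (fun k _ hkl => by rw [if_neg hkl, mul_zero])
          (fun h => absurd (mem_range.mpr hℓn) h), if_pos rfl]
        have : (ℓ.factorial : ℝ) ≠ 0 := by positivity
        field_simp
      rw [hsplit, hpoly]
      ring
    rw [hkey]
    -- final estimates
    have hterm : ∀ i ∈ range n,
        |β i * (iteratedDeriv n f (ξ i) * (-(i : ℝ) * δ) ^ n / n.factorial)|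
          ≤ ((ℓ.factorial : ℝ) * (2 ^ (n - 1) * (n : ℝ) ^ (n - 1 - ℓ)))
            * (M * ((n : ℝ) * δ) ^ n / n.factorial) := by
      intro i hi
      have hiℝ : (i : ℝ) ≤ (n : ℝ) := by exact_mod_cast (mem_range.mp hi).le
      rw [abs_mul]
      refine mul_le_mul (hB i hi) ?_ (abs_nonneg _) hBnn
      rw [abs_div, abs_mul, Nat.abs_cast]
      have h1 : |iteratedDeriv n f (ξ i)| ≤ M := hMle (ξ i) (hξmem i hi)
      have h2 : |(-(i : ℝ) * δ) ^ n| ≤ ((n : ℝ) * δ) ^ n := by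
        rw [abs_pow, abs_mul, abs_neg, Nat.abs_cast, abs_of_pos hδ]
        exact pow_le_pow_left₀ (by positivity) (mul_le_mul_of_nonneg_right hiℝ hδ.le) n
      have hfac : (0 : ℝ) < (n.factorial : ℝ) := by positivity
      gcongr
    have hfinnat : 2*ℓ * (ℓ.factorial * 2^(2*ℓ-1) * (2*ℓ)^(2*ℓ-1-ℓ)) * (2*ℓ)^(2*ℓ)
        ≤ (2*ℓ)^(3*ℓ+1) * (2*ℓ).factorial := by
      have hexp : 2*ℓ-1-ℓ = ℓ - 1 := by omega
      rw [hexp]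
      have h1 := nat_final ℓ hℓ
      calc 2*ℓ * (ℓ.factorial * 2^(2*ℓ-1) * (2*ℓ)^(ℓ-1)) * (2*ℓ)^(2*ℓ)
          = (ℓ.factorial * 2^(2*ℓ-1)) * ((2*ℓ) * (2*ℓ)^(ℓ-1) * (2*ℓ)^(2*ℓ)) := by ring
        _ = (ℓ.factorial * 2^(2*ℓ-1)) * (2*ℓ)^(3*ℓ) := by
            rw [show (2*ℓ) * (2*ℓ)^(ℓ-1) * (2*ℓ)^(2*ℓ) = (2*ℓ)^(1+(ℓ-1)+2*ℓ) by
              rw [pow_add, pow_add, pow_one],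
              show 1+(ℓ-1)+2*ℓ = 3*ℓ by omega]
        _ ≤ (2*ℓ * (2*ℓ).factorial) * (2*ℓ)^(3*ℓ) := Nat.mul_le_mul_right _ h1
        _ = (2*ℓ)^(3*ℓ+1) * (2*ℓ).factorial := by rw [pow_succ]; ring
    rw [← hn] at hfinnat
    have hfinℝ : (n:ℝ) * ((ℓ.factorial : ℝ) * 2^(n-1) * (n:ℝ)^(n-1-ℓ)) * (n:ℝ)^n
        ≤ (n:ℝ)^(3*ℓ+1) * (n.factorial : ℝ) := by exact_mod_cast hfinnat
    have hfacne : (n.factorial : ℝ) ≠ 0 := by positivity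
    calc |∑ i ∈ range n, β i * (iteratedDeriv n f (ξ i) * (-(i : ℝ) * δ) ^ n / n.factorial)|
        ≤ ∑ i ∈ range n,
            |β i * (iteratedDeriv n f (ξ i) * (-(i : ℝ) * δ) ^ n / n.factorial)| :=
          Finset.abs_sum_le_sum_abs _ _
      _ ≤ ∑ _i ∈ range n, ((ℓ.factorial : ℝ) * (2 ^ (n - 1) * (n : ℝ) ^ (n - 1 - ℓ)))
            * (M * ((n : ℝ) * δ) ^ n / n.factorial) := Finset.sum_le_sum hterm
      _ = (n : ℝ) * (((ℓ.factorial : ℝ) * (2 ^ (n - 1) * (n : ℝ) ^ (n - 1 - ℓ)))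
            * (M * ((n : ℝ) * δ) ^ n / n.factorial)) := by
          rw [Finset.sum_const, card_range, nsmul_eq_mul]
      _ = ((n:ℝ) * ((ℓ.factorial : ℝ) * 2^(n-1) * (n:ℝ)^(n-1-ℓ)) * (n:ℝ)^n)
            * (δ^n * M) / n.factorial := by
          rw [mul_pow]; ring
      _ ≤ ((n:ℝ)^(3*ℓ+1) * (n.factorial : ℝ)) * (δ^n * M) / n.factorial := by
          gcongr
      _ = (n:ℝ)^(3*ℓ+1) * δ^n * M := by field_simp
      _ = (2 * (ℓ:ℝ))^(3*ℓ+1) * δ^n * M := by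
          rw [show ((n:ℕ):ℝ) = 2*(ℓ:ℝ) by rw [hn]; push_cast; ring]
end

section
/- Let β solve W_{2ℓ}^T β = ℓ! e_ℓ where W_{2ℓ} is the Vandermonde matrix at the points 0, −1, …, −(2ℓ−1) and e_ℓ is a standard basis vector. Then every entry of β satisfies |β_i| ≤ (2ℓ)! · (2ℓ)^ℓ. -/
/-!
The Vandermonde matrix at distinct nodes is invertible, and interpolating `X ^ j` at the nodes
shows that `β k = ℓ! · [X^ℓ] L_k`, where `L_k` is the `k`-th Lagrange basis polynomial.
Write `L_k = w_k ∏_{j ≠ k} (X - x_j)`. Since the nodes are distinct integers, the nodal weight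
`w_k = ∏_{j ≠ k} (x_k - x_j)⁻¹` has absolute value at most `1`, and by Vieta every coefficient of
`∏_{j ≠ k} (X + j)` is at most `∏_{j ≠ k} (j + 1) ≤ (2ℓ)!`. Hence `|β k| ≤ ℓ! (2ℓ)! ≤ (2ℓ)^ℓ (2ℓ)!`.
-/

open Polynomial Finset Matrix
open scoped Nat

section Vandermonde

variable {F : Type*} [Field F] {n : ℕ} {v : Fin n → F}

theorem Lagrange.interpolate_pow {j : ℕ} (hv : Function.Injective v) (hj : j < n) :
    Lagrange.interpolate univ v (fun k => v k ^ j) = X ^ j := by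
  refine (Lagrange.eq_interpolate_of_eval_eq _ hv.injOn ?_ fun k _ => eval_X_pow _).symm
  rw [degree_X_pow, card_univ, Fintype.card_fin]
  exact_mod_cast hj

theorem Matrix.vandermonde_transpose_mulVec_coeff_basis (hv : Function.Injective v) (m : ℕ) :
    (vandermonde v)ᵀ *ᵥ (fun k => (Lagrange.basis univ v k).coeff m) =
      fun j : Fin n => if (j : ℕ) = m then 1 else 0 := by
  funext j
  calc ((vandermonde v)ᵀ *ᵥ fun k => (Lagrange.basis univ v k).coeff m) j
      = (Lagrange.interpolate univ v (fun k => v k ^ (j : ℕ))).coeff m := by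
        simp only [mulVec, dotProduct, transpose_apply, vandermonde_apply,
          Lagrange.interpolate_apply, finsetSum_coeff, coeff_C_mul]
    _ = _ := by rw [Lagrange.interpolate_pow hv j.isLt, coeff_X_pow]; simp only [eq_comm]

theorem Matrix.eq_coeff_basis_of_vandermonde_transpose_mulVec (hv : Function.Injective v)
    {m : ℕ} {c : F} {β : Fin n → F}
    (hβ : (vandermonde v)ᵀ *ᵥ β = fun j : Fin n => if (j : ℕ) = m then c else 0) :
    β = fun k => c * (Lagrange.basis univ v k).coeff m := by
  have hunit : IsUnit (vandermonde v)ᵀ := by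
    rw [isUnit_iff_isUnit_det, det_transpose, isUnit_iff_ne_zero]
    exact det_vandermonde_ne_zero_iff.mpr hv
  refine mulVec_injective_iff_isUnit.mpr hunit (hβ.trans ?_)
  change _ = _ *ᵥ (c • fun k => (Lagrange.basis univ v k).coeff m)
  rw [mulVec_smul, vandermonde_transpose_mulVec_coeff_basis hv]
  funext j
  simp

end Vandermonde

section OrderedField

variable {K : Type*} [Field K] [LinearOrder K] [IsStrictOrderedRing K] {ι : Type*}

theorem Lagrange.abs_coeff_nodal_le (s : Finset ι) (v : ι → K) (m : ℕ) :
    |(Lagrange.nodal s v).coeff m| ≤ ∏ j ∈ s, (|v j| + 1) := by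
  rw [prod_add_one]
  rcases le_or_gt m #s with hm | hm
  · have hnodal : Lagrange.nodal s v = ∏ j ∈ s, (X + C (-v j)) := by
      simp only [Lagrange.nodal, map_neg, sub_eq_add_neg]
    rw [hnodal, prod_X_add_C_coeff s _ hm]
    calc |∑ t ∈ s.powersetCard (#s - m), ∏ j ∈ t, -v j|
        ≤ ∑ t ∈ s.powersetCard (#s - m), ∏ j ∈ t, |v j| := by
          refine (abs_sum_le_sum_abs _ _).trans (le_of_eq ?_)
          simp only [abs_prod, abs_neg]
      _ ≤ ∑ t ∈ s.powerset, ∏ j ∈ t, |v j| :=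
          sum_le_sum_of_subset_of_nonneg
            (fun t ht => mem_powerset.2 (mem_powersetCard.1 ht).1)
            fun t _ _ => prod_nonneg fun j _ => abs_nonneg _
  · rw [coeff_eq_zero_of_natDegree_lt (by rwa [Lagrange.natDegree_nodal]), abs_zero]
    exact sum_nonneg fun t _ => prod_nonneg fun j _ => abs_nonneg _

theorem Lagrange.abs_nodalWeight_le_one [DecidableEq ι] {s : Finset ι} {v : ι → K}
    {i : ι} (hsep : ∀ j ∈ s.erase i, 1 ≤ |v i - v j|) : |Lagrange.nodalWeight s v i| ≤ 1 := by
  rw [Lagrange.nodalWeight, abs_prod]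
  exact prod_le_one (fun j _ => abs_nonneg _)
    fun j hj => by rw [abs_inv]; exact inv_le_one_of_one_le₀ (hsep j hj)

theorem Lagrange.abs_coeff_basis_le [DecidableEq ι] {s : Finset ι} {v : ι → K}
    {i : ι} (hi : i ∈ s) (hsep : ∀ j ∈ s.erase i, 1 ≤ |v i - v j|) (m : ℕ) :
    |(Lagrange.basis s v i).coeff m| ≤ ∏ j ∈ s.erase i, (|v j| + 1) := by
  rw [Lagrange.basis_eq_prod_sub_inv_mul_nodal_div hi, ← Lagrange.nodal_erase_eq_nodal_div hi,
    coeff_C_mul, abs_mul]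
  exact (mul_le_of_le_one_left (abs_nonneg _) (abs_nodalWeight_le_one hsep)).trans
    (abs_coeff_nodal_le _ _ m)

theorem one_le_abs_neg_natCast_sub_neg_natCast {i j : ℕ} (h : i ≠ j) :
    1 ≤ |-(i : K) - -(j : K)| := by
  have hZ : (1 : ℤ) ≤ |(j : ℤ) - i| := Int.one_le_abs (sub_ne_zero.2 (by exact_mod_cast h.symm))
  rw [neg_sub_neg]
  exact_mod_cast hZ

theorem prod_erase_abs_neg_natCast_add_one_le_factorial {n : ℕ} (i : Fin n) :
    ∏ j ∈ univ.erase i, (|-((j : ℕ) : K)| + 1) ≤ n ! := by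
  have hsub : ∏ j ∈ univ.erase i, ((j : ℕ) + 1) ≤ ∏ j : Fin n, ((j : ℕ) + 1) :=
    prod_le_prod_of_subset_of_one_le' (erase_subset _ _) fun _ _ _ => Nat.le_add_left 1 _
  rw [Fin.prod_univ_eq_prod_range (· + 1), prod_range_add_one_eq_factorial] at hsub
  simp only [abs_neg, Nat.abs_cast]
  exact_mod_cast hsub

theorem abs_coeff_basis_neg_natCast_le_factorial {n : ℕ} (i : Fin n) (m : ℕ) :
    |(Lagrange.basis univ (fun j : Fin n => -((j : ℕ) : K)) i).coeff m| ≤ n ! := by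
  refine (Lagrange.abs_coeff_basis_le (mem_univ i) (fun j hj => ?_) m).trans
    (prod_erase_abs_neg_natCast_add_one_le_factorial i)
  exact one_le_abs_neg_natCast_sub_neg_natCast (Fin.val_ne_of_ne (ne_of_mem_erase hj).symm)

end OrderedField

theorem stmt10_general (ℓ : ℕ) (β : Fin (2 * ℓ) → ℝ)
    (hβ : (Matrix.vandermonde (fun i : Fin (2 * ℓ) => -(i : ℝ))).transpose.mulVec β =
      fun j : Fin (2 * ℓ) => if (j : ℕ) = ℓ then (Nat.factorial ℓ : ℝ) else 0) :
    ∀ i, |β i| ≤ (Nat.factorial (2 * ℓ) : ℝ) * (2 * ℓ : ℝ) ^ ℓ := by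
  intro i
  have hinj : Function.Injective (fun i : Fin (2 * ℓ) => -(i : ℝ)) :=
    fun a b h => Fin.ext (by simpa using h)
  have hfac : (ℓ ! : ℝ) ≤ (2 * ℓ : ℝ) ^ ℓ := by
    exact_mod_cast (Nat.factorial_le_pow ℓ).trans
      (Nat.pow_le_pow_left (Nat.le_mul_of_pos_left ℓ two_pos) ℓ)
  rw [eq_coeff_basis_of_vandermonde_transpose_mulVec hinj hβ, abs_mul, Nat.abs_cast, mul_comm]
  exact mul_le_mul (abs_coeff_basis_neg_natCast_le_factorial i ℓ) hfac (by positivity)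
    (by positivity)

/-- If β solves W_{2ℓ}ᵀ β = ℓ! e_ℓ, where W_{2ℓ} is the Vandermonde matrix at the
points 0, −1, …, −(2ℓ−1) and e_ℓ is the standard basis vector (so that
Σ_i β_i (−i)^j = ℓ!·1{j=ℓ} for 0 ≤ j ≤ 2ℓ−1), then |β_i| ≤ (2ℓ)!·(2ℓ)^ℓ for all i. -/
theorem stmt10 (ℓ : ℕ) (hℓ : 0 < ℓ) (β : Fin (2 * ℓ) → ℝ)
    (hβ : (Matrix.vandermonde (fun i : Fin (2 * ℓ) => -(i : ℝ))).transpose.mulVec β =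
      fun j : Fin (2 * ℓ) => if (j : ℕ) = ℓ then (Nat.factorial ℓ : ℝ) else 0) :
    ∀ i, |β i| ≤ (Nat.factorial (2 * ℓ) : ℝ) * (2 * ℓ : ℝ) ^ ℓ :=
  stmt10_general ℓ β hβ
end

section
/- For X ∼ Binomial(n, p) and 0 ≤ k ≤ n, Pr[X ≤ k] ≥ (1/√(2n)) · exp(−n · KL(k/n ∥ p)), where KL(q₁ ∥ q₂) = q₁ log(q₁/q₂) + (1−q₁) log((1−q₁)/(1−q₂)). -/
/-!
Keeping only the term `j = k` of the sum and writing `q = k / n`, the identity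
`exp (-n KL(q ‖ p)) q^k (1 - q)^(n - k) = p^k (1 - p)^(n - k)` reduces the claim to
`1 / √(2n) ≤ C(n, k) q^k (1 - q)^(n - k)`, a lower bound on the probability that `Binomial(n, q)`
hits its mode `k`. For `k, n - k ≥ 2` this follows from Stirling: `j! / (√(2j) (j/e)^j)` decreases
to `√π`, so it lies in `[√π, e²/4]` for `j ≥ 2`, and `e⁴/16 ≤ 2√π` absorbs the constants once
`2 √(k (n - k)) ≤ n` is used. If `k` or `n - k` is `0` or `1` the bound is direct, using
`(1 + 1/m)^m ≤ e`.
-/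

open Real Stirling
open scoped Nat

lemma Stirling.stirlingSeq_two : stirlingSeq 2 = exp 1 ^ 2 / 4 := by
  have h : √(2 * (2 : ℕ) : ℝ) = 2 := by
    rw [show (2 * (2 : ℕ) : ℝ) = 2 ^ 2 by norm_num, sqrt_sq zero_le_two]
  rw [stirlingSeq, h]
  field_simp
  norm_num [Nat.factorial]

lemma Stirling.factorial_le_of_two_le {k : ℕ} (hk : 2 ≤ k) :
    (k ! : ℝ) ≤ exp 1 ^ 2 / 4 * (√(2 * k) * (k / exp 1) ^ k) := by
  have hs : stirlingSeq k ≤ stirlingSeq 2 := by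
    obtain ⟨j, rfl⟩ := Nat.exists_eq_add_of_le' hk
    exact stirlingSeq'_antitone (by omega : 1 ≤ j + 1)
  have hpos : 0 < √(2 * k) * (k / exp 1) ^ k := by
    have : (0 : ℝ) < k := by exact_mod_cast (by omega : 0 < k)
    positivity
  calc (k ! : ℝ) = stirlingSeq k * (√(2 * k) * (k / exp 1) ^ k) :=
        (div_mul_cancel₀ _ hpos.ne').symm
    _ ≤ _ := by rw [← stirlingSeq_two]; gcongr

lemma exp_one_pow_four_div_sixteen_le_two_mul_sqrt_pi : exp 1 ^ 4 / 16 ≤ 2 * √π := by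
  have he : exp 1 ^ 4 ≤ 2.72 ^ 4 := by
    gcongr
    exact exp_one_lt_d9.le.trans (by norm_num)
  have hπ : (1.77 : ℝ) ≤ √π := by
    rw [le_sqrt (by norm_num) pi_nonneg]
    linarith [pi_gt_d6]
  linarith

lemma factorial_mul_factorial_mul_pow_le {k m : ℕ} (hk : 2 ≤ k) (hm : 2 ≤ m) :
    (k ! * m ! : ℝ) * ((k : ℝ) + m) ^ (k + m)
      ≤ √(2 * ((k : ℝ) + m)) * (k + m)! * (k : ℝ) ^ k * (m : ℝ) ^ m := by
  set N : ℝ := k + m with hN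
  have hsqrt : √(2 * k) * √(2 * m) ≤ N := by
    nlinarith [sq_nonneg (√(2 * k) - √(2 * m)), sq_sqrt (by positivity : (0 : ℝ) ≤ 2 * k),
      sq_sqrt (by positivity : (0 : ℝ) ≤ 2 * m)]
  have hpow : ((k : ℝ) / exp 1) ^ k * ((m : ℝ) / exp 1) ^ m * N ^ (k + m)
      = (k : ℝ) ^ k * (m : ℝ) ^ m * (N / exp 1) ^ (k + m) := by
    rw [div_pow, div_pow, div_pow, pow_add (exp 1)]
    field_simp
  have hsqrt_pi : √(2 * N) * √(2 * π * N) = 2 * √π * N := by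
    rw [← sqrt_mul (by positivity), show 2 * N * (2 * π * N) = π * (2 * N) ^ 2 by ring,
      sqrt_mul pi_nonneg, sqrt_sq (by positivity)]
    ring
  have hstirling : √(2 * π * N) * (N / exp 1) ^ (k + m) ≤ (k + m)! := by
    simpa [hN] using le_factorial_stirling (k + m)
  calc (k ! * m ! : ℝ) * N ^ (k + m)
      ≤ (exp 1 ^ 2 / 4 * (√(2 * k) * (k / exp 1) ^ k))
          * (exp 1 ^ 2 / 4 * (√(2 * m) * (m / exp 1) ^ m)) * N ^ (k + m) := by
        gcongr
        exacts [factorial_le_of_two_le hk, factorial_le_of_two_le hm]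
    _ = exp 1 ^ 4 / 16 * (√(2 * k) * √(2 * m))
          * ((k : ℝ) ^ k * (m : ℝ) ^ m * (N / exp 1) ^ (k + m)) := by
        rw [← hpow]; ring
    _ ≤ 2 * √π * N * ((k : ℝ) ^ k * (m : ℝ) ^ m * (N / exp 1) ^ (k + m)) := by
        gcongr
        exact exp_one_pow_four_div_sixteen_le_two_mul_sqrt_pi
    _ = √(2 * N) * (√(2 * π * N) * (N / exp 1) ^ (k + m)) * (k : ℝ) ^ k * (m : ℝ) ^ m := by
        rw [← hsqrt_pi]; ring
    _ ≤ √(2 * N) * (k + m)! * (k : ℝ) ^ k * (m : ℝ) ^ m := by gcongr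

noncomputable def binomialModeProb (k m : ℕ) : ℝ :=
  ((k + m).choose k : ℝ) * (k / (k + m : ℝ)) ^ k * (m / (k + m : ℝ)) ^ m

lemma binomialModeProb_comm (k m : ℕ) : binomialModeProb k m = binomialModeProb m k := by
  rw [binomialModeProb, binomialModeProb, Nat.choose_symm_add, add_comm (m : ℝ), add_comm m]
  ring

lemma binomialModeProb_eq (k m : ℕ) (h : k + m ≠ 0) :
    binomialModeProb k m = (k + m)! * (k : ℝ) ^ k * (m : ℝ) ^ m
      / (k ! * m ! * ((k : ℝ) + m) ^ (k + m)) := by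
  have hN : (k : ℝ) + m ≠ 0 := by exact_mod_cast h
  rw [binomialModeProb, Nat.cast_choose ℝ (Nat.le_add_right k m), Nat.add_sub_cancel_left,
    div_pow, div_pow, pow_add ((k : ℝ) + m)]
  field_simp

lemma binomialModeProb_zero_left (m : ℕ) : binomialModeProb 0 m = 1 := by
  rcases eq_or_ne m 0 with rfl | hm
  · simp [binomialModeProb]
  · simp [binomialModeProb, hm]

lemma one_le_sqrt_mul_binomialModeProb_one_left (m : ℕ) :
    1 ≤ √(2 * (1 + (m : ℝ))) * binomialModeProb 1 m := by
  have hprob : binomialModeProb 1 m = ((m : ℝ) / (1 + m)) ^ m := by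
    rw [binomialModeProb, add_comm 1 m, Nat.choose_one_right]
    push_cast
    field_simp
    ring
  rw [hprob]
  rcases Nat.lt_or_ge m 3 with hm3 | hm3
  · interval_cases m
    · norm_num
    · norm_num
    · have : (9 / 4 : ℝ) ≤ √6 := by rw [le_sqrt] <;> norm_num
      norm_num
      linarith
  · have he : exp 1 ≤ √(2 * (1 + (m : ℝ))) := by
      have : (3 : ℝ) ≤ m := by exact_mod_cast hm3
      rw [le_sqrt (exp_pos 1).le (by positivity)]
      nlinarith [exp_one_lt_d9, exp_pos 1]
    have hinv : ((m : ℝ) / (1 + m)) ^ m * (1 + (m : ℝ)⁻¹) ^ m = 1 := by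
      rw [← mul_pow, show (m : ℝ) / (1 + m) * (1 + (m : ℝ)⁻¹) = 1 by field_simp; ring, one_pow]
    calc (1 : ℝ) = ((m : ℝ) / (1 + m)) ^ m * (1 + (m : ℝ)⁻¹) ^ m := hinv.symm
      _ ≤ ((m : ℝ) / (1 + m)) ^ m * √(2 * (1 + (m : ℝ))) := by
        gcongr
        exact one_add_inv_pow_le_exp.trans he
      _ = _ := mul_comm _ _

lemma one_le_sqrt_mul_binomialModeProb_of_two_le {k m : ℕ} (hk : 2 ≤ k) (hm : 2 ≤ m) :
    1 ≤ √(2 * ((k : ℝ) + m)) * binomialModeProb k m := by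
  rw [binomialModeProb_eq k m (by omega), mul_div_assoc', le_div_iff₀ (by positivity), one_mul]
  exact (factorial_mul_factorial_mul_pow_le hk hm).trans_eq (by ring)

lemma one_le_sqrt_mul_binomialModeProb {k m : ℕ} (h : k + m ≠ 0) :
    1 ≤ √(2 * ((k : ℝ) + m)) * binomialModeProb k m := by
  wlog hkm : k ≤ m generalizing k m
  · rw [binomialModeProb_comm, add_comm (k : ℝ)]
    exact this (by omega) (by omega)
  rcases Nat.lt_or_ge k 2 with hk | hk
  · interval_cases k
    · have : (1 : ℝ) ≤ m := by exact_mod_cast (by omega : 1 ≤ m)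
      rw [binomialModeProb_zero_left, mul_one, le_sqrt zero_le_one (by positivity)]
      push_cast
      linarith
    · rw [Nat.cast_one]
      exact one_le_sqrt_mul_binomialModeProb_one_left m
  · exact one_le_sqrt_mul_binomialModeProb_of_two_le hk (hk.trans hkm)

lemma exp_neg_mul_mul_log_div_mul_pow {k : ℕ} {t x p : ℝ} (hx : 0 ≤ x) (hp : 0 < p)
    (htx : t * x = k) : exp (-(t * (x * log (x / p)))) * x ^ k = p ^ k := by
  rcases hx.eq_or_lt with rfl | hx
  · obtain rfl : k = 0 := by exact_mod_cast htx.symm.trans (mul_zero _)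
    simp
  · rw [← mul_assoc, htx, ← mul_neg, ← log_inv, inv_div, exp_nat_mul, exp_log (div_pos hp hx),
      ← mul_pow, div_mul_cancel₀ p hx.ne']

lemma exp_neg_mul_bernoulliKL_mul_pow_mul_pow {k m : ℕ} {t q p : ℝ} (hq0 : 0 ≤ q) (hq1 : q ≤ 1)
    (hp0 : 0 < p) (hp1 : p < 1) (htq : t * q = k) (htq' : t * (1 - q) = m) :
    exp (-t * (q * log (q / p) + (1 - q) * log ((1 - q) / (1 - p)))) * (q ^ k * (1 - q) ^ m)
      = p ^ k * (1 - p) ^ m := by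
  rw [neg_mul, mul_add, neg_add, exp_add, mul_mul_mul_comm,
    exp_neg_mul_mul_log_div_mul_pow hq0 hp0 htq,
    exp_neg_mul_mul_log_div_mul_pow (sub_nonneg.2 hq1) (sub_pos.2 hp1) htq']

theorem stmt11_general (n k : ℕ) (hn : 0 < n) (hk : k ≤ n) (p : ℝ) (hp0 : 0 < p) (hp1 : p < 1) :
    (1 / Real.sqrt (2 * n)) * Real.exp (-(n : ℝ) *
        (((k : ℝ) / n) * Real.log (((k : ℝ) / n) / p) +
          (1 - (k : ℝ) / n) * Real.log ((1 - (k : ℝ) / n) / (1 - p))))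
      ≤ ∑ j ∈ Finset.range (k + 1), (n.choose j : ℝ) * p ^ j * (1 - p) ^ (n - j) := by
  obtain ⟨m, rfl⟩ := Nat.exists_eq_add_of_le hk
  have hN0 : (k : ℝ) + m ≠ 0 := by exact_mod_cast hn.ne'
  rw [Nat.cast_add]
  set q : ℝ := k / (k + m)
  set E := exp (-(k + m : ℝ) * (q * log (q / p) + (1 - q) * log ((1 - q) / (1 - p))))
  have hq1 : 1 - q = m / (k + m) := by simp only [q]; field_simp; ring
  have hE : E * (q ^ k * (1 - q) ^ m) = p ^ k * (1 - p) ^ m :=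
    exp_neg_mul_bernoulliKL_mul_pow_mul_pow (by positivity)
      (by rw [← sub_nonneg, hq1]; positivity) hp0 hp1 (by simp only [q]; field_simp)
      (by rw [hq1]; field_simp)
  have hmode : 1 / √(2 * (k + m : ℝ)) ≤ (k + m).choose k * (q ^ k * (1 - q) ^ m) := by
    have hprob : binomialModeProb k m = (k + m).choose k * (q ^ k * (1 - q) ^ m) := by
      rw [binomialModeProb, hq1]; ring
    rw [← hprob, div_le_iff₀ (by positivity), mul_comm]
    exact one_le_sqrt_mul_binomialModeProb hn.ne'
  calc 1 / √(2 * (k + m : ℝ)) * E ≤ (k + m).choose k * (q ^ k * (1 - q) ^ m) * E := by gcongr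
    _ = (k + m).choose k * p ^ k * (1 - p) ^ (k + m - k) := by
      rw [mul_assoc, mul_comm _ E, hE, Nat.add_sub_cancel_left]; ring
    _ ≤ _ := by
      have := (sub_pos.2 hp1).le
      exact Finset.single_le_sum
        (f := fun j ↦ ((k + m).choose j : ℝ) * p ^ j * (1 - p) ^ (k + m - j))
        (fun j _ ↦ by positivity) (Finset.self_mem_range_succ k)

/-- Lower tail bound for the binomial distribution: for X ∼ Binomial(n, p) and k ≤ n
with k/n ≤ p, Pr[X ≤ k] ≥ (1/√(2n)) exp(−n · KL(k/n ∥ p)). -/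
theorem stmt11 (n k : ℕ) (hn : 0 < n) (hk : k ≤ n) (p : ℝ) (hp0 : 0 < p) (hp1 : p < 1)
    (hkp : (k : ℝ) / n ≤ p) :
    (1 / Real.sqrt (2 * n)) * Real.exp (-(n : ℝ) *
        (((k : ℝ) / n) * Real.log (((k : ℝ) / n) / p) +
          (1 - (k : ℝ) / n) * Real.log ((1 - (k : ℝ) / n) / (1 - p))))
      ≤ ∑ j ∈ Finset.range (k + 1), (n.choose j : ℝ) * p ^ j * (1 - p) ^ (n - j) :=
  stmt11_general n k hn hk p hp0 hp1
end
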